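/- Let G and G' be finite simple graphs with vertex sets V and V', equipped with initial colorings c₀ : V → C and c₀' : V' → C, and let (c_t), (c_t') denote their 1-WL colorings. Let (h_t), (h_t') be message-passing computations on G and G' with the same sequence of update functions f_t and with initial features h₀ = c₀ and h₀' = c₀'. If at some iteration T the multisets of 1-WL colors agree, i.e. {{c_T(v) : v ∈ V}} = {{c_T'(v') : v' ∈ V'}}, then {{h_T(v) : v ∈ V}} = {{h_T'(v') : v' ∈ V'}}; consequently any graph-level readout F(G) = f_Read({{h_T(v) : v ∈ V}}) satisfies F(G) = F(G'). (If a message passing GNN outputs different values on G and G', then the 1-WL algorithm determines that G and G' are not isomorphic.) -/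
import Mathlib


open scoped Classical

/-- The type of 1-WL colors after `t` refinement rounds, starting from colors in `C`:
`C₀ = C`, `C_{t+1} = C_t × Multiset (C_t)`. -/
def WLColor (C : Type) : ℕ → Type
  | 0 => C
  | t + 1 => WLColor C t × Multiset (WLColor C t)

/-- The 1-dimensional Weisfeiler-Leman colorings of a finite simple graph `G`
with initial coloring `c0`:
`c_{t+1}(v) = (c_t(v), {{c_t(u) : u ∈ N(v)}})`. -/
noncomputable def wlColoring {V C : Type} [Fintype V] (G : SimpleGraph V)
    (c0 : V → C) : (t : ℕ) → V → WLColor C t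
  | 0 => c0
  | t + 1 => fun v =>
      (wlColoring G c0 t v, (G.neighborFinset v).val.map (wlColoring G c0 t))

/-- A message-passing computation on a finite simple graph `G` with initial features
`h0 : V → X 0` and update functions `f t : X t → Multiset (X t) → X (t+1)`:
`h_{t+1}(v) = f_t (h_t(v), {{h_t(u) : u ∈ N(v)}})`. -/
noncomputable def mpnn {V : Type} [Fintype V] (G : SimpleGraph V)
    {X : ℕ → Type} (h0 : V → X 0)
    (f : (t : ℕ) → X t → Multiset (X t) → X (t + 1)) : (t : ℕ) → V → X t
  | 0 => h0
  | t + 1 => fun v =>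
      f t (mpnn G h0 f t v) ((G.neighborFinset v).val.map (mpnn G h0 f t))

/-- Decode a WL color into the GNN feature it determines. -/
noncomputable def wlDecode {X : ℕ → Type}
    (f : (t : ℕ) → X t → Multiset (X t) → X (t + 1)) :
    (t : ℕ) → WLColor (X 0) t → X t
  | 0 => id
  | t + 1 => fun c => f t (wlDecode f t c.1) (c.2.map (wlDecode f t))

theorem mpnn_eq_decode_wl {V : Type} [Fintype V] (G : SimpleGraph V)
    {X : ℕ → Type} (c0 : V → X 0)
    (f : (t : ℕ) → X t → Multiset (X t) → X (t + 1)) :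
    ∀ t v, mpnn G c0 f t v = wlDecode f t (wlColoring G c0 t v) := by
  intro t
  induction t with
  | zero => intro v; rfl
  | succ t ih =>
    intro v
    simp only [mpnn, wlColoring, wlDecode, Multiset.map_map]
    congr 1
    · exact ih v
    · exact Multiset.map_congr rfl (fun u _ => ih u)

/-- If at some iteration `T` the multisets of 1-WL colors of two graphs agree, then the
multisets of features computed by any message-passing GNN (same update functions, initial
features equal to the initial coloring) also agree at iteration `T`; consequently any
graph-level readout takes the same value on both graphs.  Contrapositively: if a message
passing GNN outputs different values on `G` and `G'`, then 1-WL distinguishes them. -/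
theorem wl_distinguishes_if_mpnn_distinguishes {V V' : Type} [Fintype V] [Fintype V']
    (G : SimpleGraph V) (G' : SimpleGraph V')
    {X : ℕ → Type} (f : (t : ℕ) → X t → Multiset (X t) → X (t + 1))
    (c0 : V → X 0) (c0' : V' → X 0)
    (T : ℕ) {Y : Type} (fRead : Multiset (X T) → Y)
    (hc : Multiset.map (wlColoring G c0 T) Finset.univ.val
        = Multiset.map (wlColoring G' c0' T) Finset.univ.val) :
    Multiset.map (mpnn G c0 f T) Finset.univ.val
        = Multiset.map (mpnn G' c0' f T) Finset.univ.val
    ∧ fRead (Multiset.map (mpnn G c0 f T) Finset.univ.val)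
        = fRead (Multiset.map (mpnn G' c0' f T) Finset.univ.val) := by
  have key : Multiset.map (mpnn G c0 f T) Finset.univ.val
      = Multiset.map (mpnn G' c0' f T) Finset.univ.val := by
    calc Multiset.map (mpnn G c0 f T) Finset.univ.val
        = Multiset.map (wlDecode f T) (Multiset.map (wlColoring G c0 T) Finset.univ.val) := by
          rw [Multiset.map_map]
          exact Multiset.map_congr rfl (fun v _ => mpnn_eq_decode_wl G c0 f T v)
      _ = Multiset.map (wlDecode f T) (Multiset.map (wlColoring G' c0' T) Finset.univ.val) := by
          rw [hc]
      _ = Multiset.map (mpnn G' c0' f T) Finset.univ.val := by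
          rw [Multiset.map_map]
          exact (Multiset.map_congr rfl (fun v _ => mpnn_eq_decode_wl G' c0' f T v)).symm
  exact ⟨key, by rw [key]⟩
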